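/- arXiv:2302.00360 — 7 statements merged into one kernel-verified Lean document; each statement's English description precedes it below -/
import Mathlib

section
/- Let L=(T,V,E) be a simple link stream and let (C,[t0,t1]) be a pair with C⊆V, |C|≥2, t0≤t1. Then (C,[t0,t1]) is a time-maximal clique of L if and only if (i) C is a clique of the instantaneous graph G_{t0}, (ii) there exist u,v∈C and a link (t0,e,u,v)∈E beginning exactly at t0, and (iii) t1 equals the final time f_{t0}(C), the minimum over pairs u,v∈C of the end times of the corresponding links containing t0. -/
open Set

/-- A simple undirected link stream: links are `(b, e, s)` where `s` is an
unordered pair of distinct vertices and `[b,e]` the existence interval. -/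
structure LinkStream (V : Type*) where
  E : Set (ℝ × ℝ × Sym2 V)
  hle : ∀ l ∈ E, l.1 ≤ l.2.1
  hne : ∀ l ∈ E, ¬ l.2.2.IsDiag
  hsimple : ∀ b e b' e' s, (b, e, s) ∈ E → (b', e', s) ∈ E →
    (b, e) ≠ (b', e') → Set.Icc b e ∩ Set.Icc b' e' = ∅

namespace LinkStream

variable {V : Type*}

/-- `(C, [t0, t1])` is a clique of the link stream. -/
def IsClique (L : LinkStream V) (C : Set V) (t0 t1 : ℝ) : Prop :=
  2 ≤ C.ncard ∧ t0 ≤ t1 ∧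
  ∀ u ∈ C, ∀ v ∈ C, u ≠ v → ∃ b e, (b, e, s(u, v)) ∈ L.E ∧ b ≤ t0 ∧ t1 ≤ e

/-- A clique that cannot be extended in time. -/
def TimeMaximal (L : LinkStream V) (C : Set V) (t0 t1 : ℝ) : Prop :=
  L.IsClique C t0 t1 ∧
  ¬ ∃ t0' t1', L.IsClique C t0' t1' ∧ Set.Icc t0 t1 ⊂ Set.Icc t0' t1'

/-- A clique that cannot be extended in vertices. -/
def VertexMaximal (L : LinkStream V) (C : Set V) (t0 t1 : ℝ) : Prop :=
  L.IsClique C t0 t1 ∧ ¬ ∃ C', L.IsClique C' t0 t1 ∧ C ⊂ C'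

/-- A maximal clique: both time-maximal and vertex-maximal. -/
def MaximalClique (L : LinkStream V) (C : Set V) (t0 t1 : ℝ) : Prop :=
  L.TimeMaximal C t0 t1 ∧ L.VertexMaximal C t0 t1

/-- Adjacency in the instantaneous graph `G_t`. -/
def Adj (L : LinkStream V) (t : ℝ) (u v : V) : Prop :=
  u ≠ v ∧ ∃ b e, (b, e, s(u, v)) ∈ L.E ∧ b ≤ t ∧ t ≤ e

/-- Neighborhood of `v` in the instantaneous graph `G_t`. -/
def Nbhd (L : LinkStream V) (t : ℝ) (v : V) : Set V := {u | L.Adj t u v}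

/-- `C` is a clique of the instantaneous graph `G_t`. -/
def GClique (L : LinkStream V) (t : ℝ) (C : Set V) : Prop :=
  ∀ u ∈ C, ∀ v ∈ C, u ≠ v → L.Adj t u v

/-- Common neighborhood `⋂_{v ∈ C} N_t(v)` in `G_t`. -/
def commonNbhd (L : LinkStream V) (t : ℝ) (C : Set V) : Set V :=
  ⋂ v ∈ C, L.Nbhd t v

/-- End times of the edges of `C` in `G_t`. -/
def endTimes (L : LinkStream V) (t : ℝ) (C : Set V) : Set ℝ :=
  {e | ∃ b u v, u ∈ C ∧ v ∈ C ∧ u ≠ v ∧ (b, e, s(u, v)) ∈ L.E ∧ b ≤ t ∧ t ≤ e}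

/-- Final time `f_t(C)` of a clique `C` of `G_t`: the minimum of end times of its edges. -/
noncomputable def ftime (L : LinkStream V) (t : ℝ) (C : Set V) : ℝ :=
  sInf (L.endTimes t C)

/-- End time `f_t(u,v)` of an edge of `G_t` (the unique such `e`, by simplicity). -/
noncomputable def fedge (L : LinkStream V) (t : ℝ) (u v : V) : ℝ :=
  sInf {e | ∃ b, (b, e, s(u, v)) ∈ L.E ∧ b ≤ t ∧ t ≤ e}

end LinkStream


namespace LinkStream

lemma cover_unique {V : Type*} (L : LinkStream V) {b e b' e' t : ℝ} {s : Sym2 V}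
    (h : (b, e, s) ∈ L.E) (h' : (b', e', s) ∈ L.E)
    (hb : b ≤ t) (he : t ≤ e) (hb' : b' ≤ t) (he' : t ≤ e') : b = b' ∧ e = e' := by
  by_contra hc
  have hne2 : (b, e) ≠ (b', e') := by
    intro hEq
    exact hc ⟨congrArg Prod.fst hEq, congrArg Prod.snd hEq⟩
  have hdisj := L.hsimple b e b' e' s h h' hne2
  have htm : t ∈ Set.Icc b e ∩ Set.Icc b' e' := ⟨⟨hb, he⟩, ⟨hb', he'⟩⟩
  rw [hdisj] at htm
  exact htm

end LinkStream

/-- characterization of time-maximal cliques. -/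
theorem time_maximal_iff {V : Type*} (L : LinkStream V) (C : Set V) (t0 t1 : ℝ)
    (hC : 2 ≤ C.ncard) (ht : t0 ≤ t1) :
    L.TimeMaximal C t0 t1 ↔
      (L.GClique t0 C ∧
       (∃ u ∈ C, ∃ v ∈ C, u ≠ v ∧ ∃ e, (t0, e, s(u, v)) ∈ L.E) ∧
       t1 = L.ftime t0 C) := by
  constructor
  · rintro ⟨hcl, hnmax⟩
    have hfin : C.Finite := by
      by_contra h
      have := Set.Infinite.ncard h
      omega
    obtain ⟨u0, hu0, v0, hv0, huv0⟩ :=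
      (Set.one_lt_ncard hfin).mp (by omega)
    -- (i) GClique
    have hG : L.GClique t0 C := by
      intro u hu v hv huv
      obtain ⟨b, e, hE, hb, he⟩ := hcl.2.2 u hu v hv huv
      exact ⟨huv, b, e, hE, hb, ht.trans he⟩
    refine ⟨hG, ?_, ?_⟩
    -- (ii) a link starting exactly at t0
    · by_contra hno
      push_neg at hno
      set S : Set ℝ := {b : ℝ | ∃ e u v, u ∈ C ∧ v ∈ C ∧ u ≠ v ∧
        (b, e, s(u, v)) ∈ L.E ∧ b ≤ t0 ∧ t0 ≤ e} with hS
      have hSfin : S.Finite := by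
        have hsub : S ⊆ ⋃ p ∈ C ×ˢ C,
            {b : ℝ | ∃ e, (b, e, s(p.1, p.2)) ∈ L.E ∧ b ≤ t0 ∧ t0 ≤ e} := by
          rintro b ⟨e, u, v, hu, hv, huv, hE, hb, he⟩
          exact Set.mem_biUnion (show (u, v) ∈ C ×ˢ C from ⟨hu, hv⟩) ⟨e, hE, hb, he⟩
        refine Set.Finite.subset (Set.Finite.biUnion (hfin.prod hfin) ?_) hsub
        intro p _
        apply Set.Subsingleton.finite
        rintro b ⟨e, hE, hb, he⟩ b' ⟨e', hE', hb', he'⟩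
        exact (L.cover_unique hE hE' hb he hb' he').1
      have hSne : S.Nonempty := by
        obtain ⟨b, e, hE, hb, he⟩ := hcl.2.2 u0 hu0 v0 hv0 huv0
        exact ⟨b, e, u0, v0, hu0, hv0, huv0, hE, hb, ht.trans he⟩
      have hSlt : ∀ b ∈ S, b < t0 := by
        rintro b ⟨e, u, v, hu, hv, huv, hE, hb, _⟩
        rcases lt_or_eq_of_le hb with h | h
        · exact h
        · exact absurd (h ▸ hE) (by simpa using hno u hu v hv huv e)
      set t0' := sSup S with ht0'
      have ht0'mem : t0' ∈ S := hSne.csSup_mem hSfin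
      have ht0'lt : t0' < t0 := hSlt _ ht0'mem
      apply hnmax
      refine ⟨t0', t1, ⟨hcl.1, ht0'lt.le.trans ht, ?_⟩, ?_, ?_⟩
      · intro u hu v hv huv
        obtain ⟨b, e, hE, hb, he⟩ := hcl.2.2 u hu v hv huv
        have hbS : b ∈ S := ⟨e, u, v, hu, hv, huv, hE, hb, ht.trans he⟩
        exact ⟨b, e, hE, le_csSup hSfin.bddAbove hbS, he⟩
      · exact Set.Icc_subset_Icc ht0'lt.le le_rfl
      · intro hsub
        have := (hsub ⟨le_rfl, ht0'lt.le.trans ht⟩).1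
        linarith
    -- (iii) t1 = ftime
    · have hbdd : BddBelow (L.endTimes t0 C) :=
        ⟨t0, by rintro e ⟨b, u, v, _, _, _, _, _, he⟩; exact he⟩
      have hne : (L.endTimes t0 C).Nonempty := by
        obtain ⟨b, e, hE, hb, he⟩ := hcl.2.2 u0 hu0 v0 hv0 huv0
        exact ⟨e, b, u0, v0, hu0, hv0, huv0, hE, hb, ht.trans he⟩
      have h1 : t1 ≤ sInf (L.endTimes t0 C) := by
        apply le_csInf hne
        rintro e' ⟨b', u, v, hu, hv, huv, hE', hb', he'⟩
        obtain ⟨b, e, hE, hb, he⟩ := hcl.2.2 u hu v hv huv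
        have := (L.cover_unique hE hE' hb (ht.trans he) hb' he').2
        exact this ▸ he
      have h2 : sInf (L.endTimes t0 C) ≤ t1 := by
        by_contra h
        push_neg at h
        apply hnmax
        refine ⟨t0, sInf (L.endTimes t0 C), ⟨hcl.1, ht.trans h.le, ?_⟩, ?_, ?_⟩
        · intro u hu v hv huv
          obtain ⟨b, e, hE, hb, he⟩ := hcl.2.2 u hu v hv huv
          exact ⟨b, e, hE, hb,
            csInf_le hbdd ⟨b, u, v, hu, hv, huv, hE, hb, ht.trans he⟩⟩
        · exact Set.Icc_subset_Icc le_rfl h.le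
        · intro hsub
          have := (hsub ⟨ht.trans h.le, le_rfl⟩).2
          linarith
      exact le_antisymm h1 h2
  · rintro ⟨hG, ⟨u0, hu0, v0, hv0, huv0, e0, hE0⟩, ht1⟩
    have hbdd : BddBelow (L.endTimes t0 C) :=
      ⟨t0, by rintro e ⟨b, u, v, _, _, _, _, _, he⟩; exact he⟩
    have hne : (L.endTimes t0 C).Nonempty :=
      ⟨e0, t0, u0, v0, hu0, hv0, huv0, hE0, le_rfl, L.hle _ hE0⟩
    have hcl : L.IsClique C t0 t1 := by
      refine ⟨hC, ht, ?_⟩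
      intro u hu v hv huv
      obtain ⟨_, b, e, hE, hb, he⟩ := hG u hu v hv huv
      refine ⟨b, e, hE, hb, ?_⟩
      rw [ht1]
      exact csInf_le hbdd ⟨b, u, v, hu, hv, huv, hE, hb, he⟩
    refine ⟨hcl, ?_⟩
    rintro ⟨t0', t1', hcl', hss⟩
    have h0 : t0 ∈ Set.Icc t0' t1' := hss.1 ⟨le_rfl, ht⟩
    have h1 : t1 ∈ Set.Icc t0' t1' := hss.1 ⟨ht, le_rfl⟩
    have hcase : t0' < t0 ∨ t1 < t1' := by
      by_contra h
      push_neg at h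
      exact hss.2 (Set.Icc_subset_Icc h.1 h.2)
    rcases hcase with h | h
    · obtain ⟨b', e', hE', hb', he'⟩ := hcl'.2.2 u0 hu0 v0 hv0 huv0
      have := (L.cover_unique hE0 hE' le_rfl (L.hle _ hE0)
        (hb'.trans h.le) (h0.2.trans he')).1
      linarith [hb'.trans h0.1, this]
    · have hlt : sInf (L.endTimes t0 C) < t1' := by
        rw [show sInf (L.endTimes t0 C) = L.ftime t0 C from rfl, ← ht1]; exact h
      obtain ⟨e, hemem, helt⟩ := exists_lt_of_csInf_lt hne hlt
      obtain ⟨b, u, v, hu, hv, huv, hE, hb, he⟩ := hemem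
      obtain ⟨b', e', hE', hb', he'⟩ := hcl'.2.2 u hu v hv huv
      have heq := (L.cover_unique hE hE' hb he (hb'.trans h0.1) ((ht.trans h.le).trans he')).2
      linarith [heq ▸ he']
end

section
/- Let L be a simple link stream, t∈T, and let (C,[t,f_t(C)]) be a time-maximal clique of L starting at t. Let N(C)=⋂_{v∈C} N_t(v) be the common neighborhood of C in G_t. Then (C,[t,f_t(C)]) is vertex-maximal (hence maximal) if and only if for every u∈N(C), f_t(C∪{u}) < f_t(C). -/
open Set

/-- Uniqueness of the link of a given pair covering time `t`. -/
lemma LinkStream.edge_unique {V : Type*} (L : LinkStream V) {b e b' e' t : ℝ} {s : Sym2 V}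
    (h1 : (b, e, s) ∈ L.E) (h2 : (b', e', s) ∈ L.E)
    (hb : b ≤ t) (he : t ≤ e) (hb' : b' ≤ t) (he' : t ≤ e') : e = e' := by
  by_contra hne
  have hpair : (b, e) ≠ (b', e') := by
    intro hp; exact hne (congrArg Prod.snd hp)
  have := L.hsimple b e b' e' s h1 h2 hpair
  have ht : t ∈ Set.Icc b e ∩ Set.Icc b' e' := ⟨⟨hb, he⟩, ⟨hb', he'⟩⟩
  rw [this] at ht
  exact ht

lemma LinkStream.bddBelow_endTimes {V : Type*} (L : LinkStream V) (t : ℝ) (C : Set V) :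
    BddBelow (L.endTimes t C) := by
  refine ⟨t, fun e he => ?_⟩
  obtain ⟨b, u, v, _, _, _, _, _, hte⟩ := he
  exact hte

/-- vertex-maximality test for a time-maximal clique. -/
theorem vertex_maximal_iff {V : Type*} (L : LinkStream V) (C : Set V) (t : ℝ)
    (h : L.TimeMaximal C t (L.ftime t C)) :
    L.VertexMaximal C t (L.ftime t C) ↔
      ∀ u ∈ L.commonNbhd t C, L.ftime t (insert u C) < L.ftime t C := by
  obtain ⟨hclq, -⟩ := h
  obtain ⟨hcard, htle, hcov⟩ := hclq
  have hCfin : C.Finite := by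
    by_contra hinf
    rw [Set.Infinite.ncard hinf] at hcard
    omega
  constructor
  · rintro ⟨-, hnoext⟩ u hu
    -- u ∉ C
    have hadj : ∀ v ∈ C, L.Adj t u v := by
      intro v hv
      have := Set.mem_iInter₂.mp hu v hv
      exact this
    have huC : u ∉ C := fun huC => (hadj u huC).1 rfl
    by_contra hlt
    push_neg at hlt
    -- then insert u C is a clique on [t, ftime C], contradiction
    apply hnoext
    refine ⟨insert u C, ⟨?_, htle, ?_⟩, ?_⟩
    · rw [Set.ncard_insert_of_notMem huC hCfin]; omega
    · intro x hx y hy hxy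
      rcases hx with rfl | hx
      · rcases hy with rfl | hy
        · exact absurd rfl hxy
        · obtain ⟨-, b, e, hE, hbt, hte⟩ := hadj y hy
          refine ⟨b, e, hE, hbt, ?_⟩
          have hmem : e ∈ L.endTimes t (insert x C) :=
            ⟨b, x, y, Set.mem_insert _ _, Set.mem_insert_of_mem _ hy, hxy, hE, hbt, hte⟩
          exact le_trans hlt (csInf_le (L.bddBelow_endTimes t _) hmem)
      · rcases hy with rfl | hy
        · obtain ⟨-, b, e, hE, hbt, hte⟩ := hadj x hx
          rw [Sym2.eq_swap] at hE
          refine ⟨b, e, hE, hbt, ?_⟩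
          have hmem : e ∈ L.endTimes t (insert y C) := by
            rw [Sym2.eq_swap] at hE
            exact ⟨b, y, x, Set.mem_insert _ _, Set.mem_insert_of_mem _ hx,
              hxy.symm, hE, hbt, hte⟩
          exact le_trans hlt (csInf_le (L.bddBelow_endTimes t _) hmem)
        · exact hcov x hx y hy hxy
    · exact Set.ssubset_insert huC
  · intro hall
    refine ⟨⟨hcard, htle, hcov⟩, ?_⟩
    rintro ⟨C', ⟨-, -, hcov'⟩, hCC'⟩
    obtain ⟨u, huC', huC⟩ := Set.exists_of_ssubset hCC'
    have hsub : C ⊆ C' := hCC'.1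
    -- u is in common neighborhood
    have hu : u ∈ L.commonNbhd t C := by
      apply Set.mem_iInter₂.mpr
      intro v hv
      have hne : u ≠ v := fun h => huC (h ▸ hv)
      obtain ⟨b, e, hE, hbt, hfe⟩ := hcov' u huC' v (hsub hv) hne
      exact ⟨hne, b, e, hE, hbt, le_trans htle hfe⟩
    have hlt := hall u hu
    -- but every end time of insert u C is ≥ ftime C
    have hge : L.ftime t C ≤ L.ftime t (insert u C) := by
      apply le_csInf
      · -- nonempty
        obtain ⟨x, hx, y, hy, hxy⟩ := (Set.one_lt_ncard hCfin).mp (by omega)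
        obtain ⟨b, e, hE, hbt, hfe⟩ := hcov x hx y hy hxy
        exact ⟨e, b, x, y, Set.mem_insert_of_mem _ hx, Set.mem_insert_of_mem _ hy, hxy,
          hE, hbt, le_trans htle hfe⟩
      · rintro e' ⟨b', x, y, hx, hy, hxy, hE', hbt', hte'⟩
        have hx' : x ∈ C' := by rcases hx with rfl | hx; exact huC'; exact hsub hx
        have hy' : y ∈ C' := by rcases hy with rfl | hy; exact huC'; exact hsub hy
        obtain ⟨b, e, hE, hbt, hfe⟩ := hcov' x hx' y hy' hxy
        have heq := L.edge_unique hE hE' hbt (le_trans htle hfe) hbt' hte'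
        exact heq ▸ hfe
    exact absurd hge (not_le.mpr hlt)
end

section
/- Let L be a simple link stream, t∈T, and C a clique of G_t with u∈⋂_{v∈C}N_t(v). If f_t(C∪{u}) ≥ f_t(C), then (C∪{u},[t,f_t(C)]) is a clique of L; consequently (C,[t,f_t(C)]) is not a maximal clique of L. -/
open Set

/-- a common neighbor not decreasing the final time extends the clique,
hence the clique is not maximal. -/
theorem extend_of_ftime_ge {V : Type*} (L : LinkStream V) (C : Set V) (t : ℝ) (u : V)
    (hC : L.GClique t C) (h2 : 2 ≤ C.ncard)
    (hu : u ∈ L.commonNbhd t C)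
    (hge : L.ftime t C ≤ L.ftime t (insert u C)) :
    L.IsClique (insert u C) t (L.ftime t C) ∧ ¬ L.MaximalClique C t (L.ftime t C) := by

  classical
  have hfin : C.Finite := Set.finite_of_ncard_ne_zero (by omega)
  obtain ⟨a, b, ha, hb, hab⟩ := (Set.one_lt_ncard_iff hfin).mp (by omega)
  have hadj : ∀ v ∈ C, L.Adj t u v := fun v hv => Set.mem_iInter₂.mp hu v hv
  have huC : u ∉ C := fun h => (hadj u h).1 rfl
  have hlb : ∀ e ∈ L.endTimes t C, t ≤ e := by
    rintro e ⟨b', x, y, hx, hy, hxy, _, _, hte⟩; exact hte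
  have hlb' : ∀ e ∈ L.endTimes t (insert u C), t ≤ e := by
    rintro e ⟨b', x, y, hx, hy, hxy, _, _, hte⟩; exact hte
  obtain ⟨b0, e0, he0, hb0, hte0⟩ := (hC a ha b hb hab).2
  have hmem0 : e0 ∈ L.endTimes t C := ⟨b0, a, b, ha, hb, hab, he0, hb0, hte0⟩
  have hbdd : BddBelow (L.endTimes t C) := ⟨t, hlb⟩
  have hbdd' : BddBelow (L.endTimes t (insert u C)) := ⟨t, hlb'⟩
  have htf : t ≤ L.ftime t C := le_csInf ⟨e0, hmem0⟩ hlb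
  have hclique : L.IsClique (insert u C) t (L.ftime t C) := by
    refine ⟨le_trans h2 (Set.ncard_le_ncard (Set.subset_insert _ _) (hfin.insert u)), htf, ?_⟩
    intro x hx y hy hxy
    rcases hx with rfl | hx
    · rcases hy with rfl | hy
      · exact absurd rfl hxy
      · obtain ⟨b1, e1, he1, hb1, hte1⟩ := (hadj y hy).2
        have hm : e1 ∈ L.endTimes t (insert x C) :=
          ⟨b1, x, y, Set.mem_insert _ _, Set.mem_insert_of_mem _ hy, hxy, he1, hb1, hte1⟩
        exact ⟨b1, e1, he1, hb1, le_trans hge (csInf_le hbdd' hm)⟩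
    · rcases hy with rfl | hy
      · obtain ⟨b1, e1, he1, hb1, hte1⟩ := (hadj x hx).2
        have he1' : (b1, e1, s(x, y)) ∈ L.E := by rwa [Sym2.eq_swap] at he1
        have hm : e1 ∈ L.endTimes t (insert y C) :=
          ⟨b1, x, y, Set.mem_insert_of_mem _ hx, Set.mem_insert _ _, hxy, he1', hb1, hte1⟩
        exact ⟨b1, e1, he1', hb1, le_trans hge (csInf_le hbdd' hm)⟩
      · obtain ⟨b1, e1, he1, hb1, hte1⟩ := (hC x hx y hy hxy).2
        have hm : e1 ∈ L.endTimes t C := ⟨b1, x, y, hx, hy, hxy, he1, hb1, hte1⟩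
        exact ⟨b1, e1, he1, hb1, csInf_le hbdd hm⟩
  refine ⟨hclique, ?_⟩
  rintro ⟨_, _, hvmax⟩
  exact hvmax ⟨insert u C, hclique, Set.ssubset_insert huC⟩
end

section
/- In any simple link stream L=(T,V,E), if (C,[t0,t1]) is a time-maximal clique, then at least one pair u,v∈C is connected by a link (t0,e,u,v)∈E whose beginning time is exactly t0. -/
open Set

/-- a time-maximal clique contains a link beginning exactly at `t0`. -/
theorem time_maximal_has_starting_link {V : Type*} (L : LinkStream V) (C : Set V)
    (t0 t1 : ℝ) (h : L.TimeMaximal C t0 t1) :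
    ∃ u ∈ C, ∃ v ∈ C, u ≠ v ∧ ∃ e, (t0, e, s(u, v)) ∈ L.E := by
  classical
  obtain ⟨⟨hcard, ht01, hpairs⟩, hmax⟩ := h
  by_contra hcon
  push_neg at hcon
  have hCfin : C.Finite := by
    by_contra hinf
    simp [Set.Infinite.ncard hinf] at hcard
  have key : ∀ u ∈ C, ∀ v ∈ C, u ≠ v →
      ∃ b, b < t0 ∧ ∃ e, (b, e, s(u, v)) ∈ L.E ∧ t1 ≤ e := by
    intro u hu v hv huv
    obtain ⟨b, e, hE, hb, he⟩ := hpairs u hu v hv huv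
    refine ⟨b, ?_, e, hE, he⟩
    rcases lt_or_eq_of_le hb with h' | h'
    · exact h'
    · exact absurd (h' ▸ hE) (hcon u hu v hv huv e)
  choose! f hflt hf using key
  set P : Set (V × V) := (C ×ˢ C) ∩ {p | p.1 ≠ p.2} with hP
  set B : Set ℝ := (fun p : V × V => f p.1 p.2) '' P with hB
  have hBfin : B.Finite := (((hCfin.prod hCfin).inter_of_left _).image _)
  have hBne : B.Nonempty := by
    obtain ⟨u0, v0, hu0, hv0, huv0⟩ := (Set.one_lt_ncard_iff hCfin).mp (by omega)
    exact ⟨f u0 v0, ⟨(u0, v0), ⟨⟨hu0, hv0⟩, huv0⟩, rfl⟩⟩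
  set b' := sSup B with hb'
  have hb'mem : b' ∈ B := hBne.csSup_mem hBfin
  have hb'lt : b' < t0 := by
    obtain ⟨⟨u, v⟩, ⟨⟨hu, hv⟩, huv⟩, hfb⟩ := hb'mem
    exact hfb ▸ hflt u hu v hv huv
  refine hmax ⟨b', t1, ⟨hcard, by linarith, ?_⟩, ?_, ?_⟩
  · intro u hu v hv huv
    obtain ⟨e, hE, he⟩ := hf u hu v hv huv
    exact ⟨f u v, e, hE,
      le_csSup hBfin.bddAbove ⟨(u, v), ⟨⟨hu, hv⟩, huv⟩, rfl⟩, he⟩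
  · exact Set.Icc_subset_Icc (le_of_lt hb'lt) le_rfl
  · intro hsup
    exact absurd (hsup ⟨le_rfl, by linarith⟩).1 (not_le.2 hb'lt)
end

section
/- Let G=(V,E) be a finite simple graph, R a clique with common neighborhood P∪X (P candidates, X excluded), and p∈P∪X a pivot. Then every maximal clique C of G with R⊆C⊆R∪P satisfies: either C contains a vertex u∈P∖N(p), or p∉C, C⊆N(p), and C∪{p} is a clique of G strictly containing C (contradicting maximality). Hence some u∈P∖N(p) lies in C whenever C is maximal with R⊆C⊆R∪P. -/
open Set

/-- correctness of the classical Bron–Kerbosch pivoting rule. -/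
theorem pivot_rule_correct {V : Type*} (G : SimpleGraph V) (R P X : Set V)
    (hR : G.IsClique R) (hPX : P ∪ X = ⋂ v ∈ R, G.neighborSet v)
    (p : V) (hp : p ∈ P ∪ X)
    (C : Set V) (hC : G.IsClique C)
    (hmax : ∀ C', G.IsClique C' → C ⊆ C' → C' = C)
    (hRC : R ⊆ C) (hCP : C ⊆ R ∪ P) :
    ∃ u ∈ P \ G.neighborSet p, u ∈ C := by
  by_contra hcon
  push_neg at hcon
  have hpI : p ∈ ⋂ v ∈ R, G.neighborSet v := hPX ▸ hp
  have hadjR : ∀ v ∈ R, G.Adj p v := by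
    intro v hv
    have := Set.mem_iInter₂.mp hpI v hv
    exact this.symm
  by_cases hpC : p ∈ C
  · rcases hCP hpC with hpR | hpP
    · exact absurd (hadjR p hpR) (G.irrefl)
    · exact hcon p ⟨hpP, fun h => G.irrefl h⟩ hpC
  · have hclq : G.IsClique (insert p C) := by
      apply hC.insert
      intro b hbC hbp
      rcases hCP hbC with hbR | hbP
      · exact hadjR b hbR
      · by_cases hb : b ∈ G.neighborSet p
        · exact hb
        · exact absurd hbC (hcon b ⟨hbP, hb⟩)
    have := hmax (insert p C) hclq (Set.subset_insert p C)
    exact hpC (this ▸ Set.mem_insert p C)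
end

section
/- Let L be a simple link stream and t∈T. If C is a maximal clique of the instantaneous graph G_t (maximal as a graph clique), then the time-maximal clique (C,[t',f_{t'}(C)]) obtained by extending [t,t] maximally in time, restricted to start time t, is vertex-maximal at time t: i.e., if ⋂_{v∈C}N_t(v)=∅ then (C,[t,f_t(C)]) cannot be extended by any vertex on the interval [t,f_t(C)], hence if it is time-maximal it is a maximal clique of L. -/
open Set

/-- a clique that is maximal in the instantaneous graph `G_t`
(empty common neighborhood) is vertex-maximal; if moreover time-maximal it is a
maximal clique of the link stream. -/
theorem maximal_in_Gt_is_vertex_maximal {V : Type*} (L : LinkStream V) (t : ℝ)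
    (C : Set V) (hC : L.GClique t C) (h2 : 2 ≤ C.ncard)
    (hempty : L.commonNbhd t C = ∅)
    (htm : L.TimeMaximal C t (L.ftime t C)) :
    L.VertexMaximal C t (L.ftime t C) ∧ L.MaximalClique C t (L.ftime t C) := by
  have hclique : L.IsClique C t (L.ftime t C) := htm.1
  have hvm : L.VertexMaximal C t (L.ftime t C) := by
    refine ⟨hclique, ?_⟩
    rintro ⟨C', hC', hsub⟩
    obtain ⟨w, hwC', hwC⟩ := Set.exists_of_ssubset hsub
    have hw : w ∈ L.commonNbhd t C := by
      simp only [LinkStream.commonNbhd, Set.mem_iInter]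
      intro v hv
      have hne : w ≠ v := fun h => hwC (h ▸ hv)
      obtain ⟨b, e, hmem, hb, he⟩ :=
        hC'.2.2 w hwC' v (hsub.1 hv) hne
      exact ⟨hne, b, e, hmem, hb, le_trans hC'.2.1 he⟩
    rw [hempty] at hw
    exact hw
  exact ⟨hvm, htm, hvm⟩
end

section
/- For any clique (C,[t0,t1]) of a simple link stream L, the pair (C,[t0, f_{t0}(C)]) is also a clique of L, and t1 ≤ f_{t0}(C); i.e., the final time f_{t0}(C) is the largest t1' such that (C,[t0,t1']) is a clique of L. -/
open Set

/-- `f_{t0}(C)` is the largest right endpoint making `C` a clique of `L`. -/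
theorem ftime_is_largest_end {V : Type*} (L : LinkStream V) (C : Set V) (t0 t1 : ℝ)
    (h : L.IsClique C t0 t1) :
    L.IsClique C t0 (L.ftime t0 C) ∧ t1 ≤ L.ftime t0 C ∧
    ∀ t1', L.IsClique C t0 t1' → t1' ≤ L.ftime t0 C := by
  classical
  -- Key: every element of endTimes is ≥ t1' for any clique (C,[t0,t1'])
  have key : ∀ t1', L.IsClique C t0 t1' → ∀ e ∈ L.endTimes t0 C, t1' ≤ e := by
    rintro t1' ⟨_, ht01, hcl⟩ e ⟨b, u, v, hu, hv, huv, hmem, hbt, hte⟩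
    obtain ⟨b', e', hmem', hb't, ht1e'⟩ := hcl u hu v hv huv
    by_cases hbe : (b, e) = (b', e')
    · cases hbe; linarith
    · exfalso
      have := L.hsimple b e b' e' s(u, v) hmem hmem' hbe
      have : t0 ∈ Set.Icc b e ∩ Set.Icc b' e' := ⟨⟨hbt, hte⟩, ⟨hb't, le_trans ht01 ht1e'⟩⟩
      rw [‹Set.Icc b e ∩ Set.Icc b' e' = ∅›] at this
      exact this
  have hbdd : BddBelow (L.endTimes t0 C) := ⟨t0, fun e ⟨b, u, v, _, _, _, _, _, hte⟩ => hte⟩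
  obtain ⟨hC2, ht01, hcl⟩ := h
  -- nonempty
  have hfin : C.Finite := by
    by_contra hinf
    rw [Set.Infinite.ncard (hinf)] at hC2; omega
  obtain ⟨u, v, hu, hv, huv⟩ := (Set.one_lt_ncard_iff hfin).mp (by omega)
  obtain ⟨b, e, hmem, hbt, ht1e⟩ := hcl u hu v hv huv
  have hne : (L.endTimes t0 C).Nonempty :=
    ⟨e, b, u, v, hu, hv, huv, hmem, hbt, le_trans ht01 ht1e⟩
  have ht1f : t1 ≤ L.ftime t0 C :=
    le_csInf hne (key t1 ⟨hC2, ht01, hcl⟩)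
  have hclique : L.IsClique C t0 (L.ftime t0 C) := by
    refine ⟨hC2, le_trans ht01 ht1f, ?_⟩
    intro a ha c hc hac
    obtain ⟨b', e', hmem', hb't, ht1e'⟩ := hcl a ha c hc hac
    exact ⟨b', e', hmem', hb't,
      csInf_le hbdd ⟨b', a, c, ha, hc, hac, hmem', hb't, le_trans ht01 ht1e'⟩⟩
  exact ⟨hclique, ht1f, fun t1' h' => le_csInf hne (key t1' h')⟩
end
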